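/- For any atomic base S and any atom X, the only closed normal proof-term s such that ⊢ s:X is derivable in ILat is the term-constant c^X with c^X ∈ S. -/
import Mathlib


namespace ILat

/-- Formulas of ILat: atoms, implication, and (atomic) second-order universal
quantification over propositional atoms. Atoms are named by natural numbers. -/
inductive Formula : Type
  | atom : ℕ → Formula
  | arrow : Formula → Formula → Formula
  | all : ℕ → Formula → Formula
deriving DecidableEq

/-- Terms of ILat: term-variables, a term-constant `c^A` for each formula `A`,
λ-abstraction, application, Λ-abstraction over atoms, and application to an atom. -/
inductive Term : Type
  | var : ℕ → Term
  | const : Formula → Term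
  | lam : ℕ → Term → Term
  | app : Term → Term → Term
  | tlam : ℕ → Term → Term
  | tapp : Term → ℕ → Term
deriving DecidableEq

/-- Free propositional atoms of a formula. -/
def Formula.fv : Formula → Finset ℕ
  | .atom X => {X}
  | .arrow A B => A.fv ∪ B.fv
  | .all X A => A.fv.erase X

/-- Substitution `A[X := Y]` of an atom `Y` for an atom `X` in a formula. -/
def Formula.substAtom : Formula → ℕ → ℕ → Formula
  | .atom Z, X, Y => if Z = X then .atom Y else .atom Z
  | .arrow A B, X, Y => .arrow (A.substAtom X Y) (B.substAtom X Y)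
  | .all Z A, X, Y => if Z = X then .all Z A else .all Z (A.substAtom X Y)

/-- Size of a formula (used as a termination measure). -/
def Formula.size : Formula → ℕ
  | .atom _ => 1
  | .arrow A B => A.size + B.size + 1
  | .all _ A => A.size + 1

theorem Formula.substAtom_size (A : Formula) (X Y : ℕ) :
    (A.substAtom X Y).size = A.size := by
  induction A with
  | atom Z => simp only [Formula.substAtom]; split <;> rfl
  | arrow B C ihB ihC => simp [Formula.substAtom, Formula.size, ihB, ihC]
  | all Z B ih => simp only [Formula.substAtom]; split <;> simp [Formula.size, ih]

/-- Simultaneous (parallel) substitution of terms for free term-variables,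
according to a partial environment `σ`. -/
def Term.msubst (σ : ℕ → Option Term) : Term → Term
  | .var x => (σ x).getD (.var x)
  | .const A => .const A
  | .lam x t => .lam x (t.msubst (fun y => if y = x then none else σ y))
  | .app t s => .app (t.msubst σ) (s.msubst σ)
  | .tlam X t => .tlam X (t.msubst σ)
  | .tapp t Y => .tapp (t.msubst σ) Y

/-- Substitution `t[x := s]` of a term for a free term-variable. -/
def Term.substV (t : Term) (x : ℕ) (s : Term) : Term :=
  t.msubst (fun y => if y = x then some s else none)

/-- Substitution `t[X := Y]` of an atom for a free propositional atom in a term. -/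
def Term.substA : Term → ℕ → ℕ → Term
  | .var x, _, _ => .var x
  | .const A, X, Y => .const (A.substAtom X Y)
  | .lam x t, X, Y => .lam x (t.substA X Y)
  | .app t s, X, Y => .app (t.substA X Y) (s.substA X Y)
  | .tlam Z t, X, Y => if Z = X then .tlam Z t else .tlam Z (t.substA X Y)
  | .tapp t Z, X, Y => .tapp (t.substA X Y) (if Z = X then Y else Z)

/-- Free term-variables of a term. -/
def Term.tfv : Term → Finset ℕ
  | .var x => {x}
  | .const _ => ∅
  | .lam x t => t.tfv.erase x
  | .app t s => t.tfv ∪ s.tfv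
  | .tlam _ t => t.tfv
  | .tapp t _ => t.tfv

/-- Free propositional atoms of a term. -/
def Term.afv : Term → Finset ℕ
  | .var _ => ∅
  | .const A => A.fv
  | .lam _ t => t.afv
  | .app t s => t.afv ∪ s.afv
  | .tlam X t => t.afv.erase X
  | .tapp t Y => insert Y t.afv

/-- A term is closed if it has no free term-variables. -/
def Closed (t : Term) : Prop := t.tfv = ∅

/-- One-step β-reduction, closed under all term-forming contexts. -/
inductive Step : Term → Term → Prop
  | beta (x : ℕ) (t s : Term) : Step (.app (.lam x t) s) (t.substV x s)
  | tbeta (X : ℕ) (t : Term) (Y : ℕ) : Step (.tapp (.tlam X t) Y) (t.substA X Y)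
  | appL {t t' : Term} (s : Term) : Step t t' → Step (.app t s) (.app t' s)
  | appR (t : Term) {s s' : Term} : Step s s' → Step (.app t s) (.app t s')
  | lam (x : ℕ) {t t' : Term} : Step t t' → Step (.lam x t) (.lam x t')
  | tlam (X : ℕ) {t t' : Term} : Step t t' → Step (.tlam X t) (.tlam X t')
  | tapp {t t' : Term} (Y : ℕ) : Step t t' → Step (.tapp t Y) (.tapp t' Y)

/-- Multi-step β-reduction `t ↠ s`: the reflexive-transitive closure of `Step`. -/
def Red : Term → Term → Prop := Relation.ReflTransGen Step

/-- A term is normal if it contains no β-redex, i.e. no reduction step applies. -/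
def Normal (t : Term) : Prop := ∀ s, ¬ Step t s

/-- A context is a finite list of statements `x : A`. -/
abbrev Ctx := List (ℕ × Formula)

/-- The typing (derivability) relation `Γ ⊢ t : A` of ILat. -/
inductive Der : Ctx → Term → Formula → Prop
  | ax {Γ : Ctx} {x : ℕ} {A : Formula} : (x, A) ∈ Γ → Der Γ (.var x) A
  | axc {Γ : Ctx} (A : Formula) : Der Γ (.const A) A
  | arrI {Γ : Ctx} {x : ℕ} {A B : Formula} {t : Term} :
      Der ((x, A) :: Γ) t B → Der Γ (.lam x t) (.arrow A B)
  | arrE {Γ : Ctx} {A B : Formula} {t s : Term} :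
      Der Γ t (.arrow A B) → Der Γ s A → Der Γ (.app t s) B
  | allI {Γ : Ctx} {X : ℕ} {A : Formula} {t : Term} :
      Der Γ t A → (∀ p ∈ Γ, X ∉ (Prod.snd p).fv) → Der Γ (.tlam X t) (.all X A)
  | allE {Γ : Ctx} {X : ℕ} {A : Formula} {t : Term} (Y : ℕ) :
      Der Γ t (.all X A) → Der Γ (.tapp t Y) (A.substAtom X Y)

/-- An argument of a spine: either a term or an atom. -/
inductive Arg : Type
  | tm : Term → Arg
  | atom : ℕ → Arg

/-- Apply a term to a single argument. -/
def Term.applyArg : Term → Arg → Term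
  | t, .tm s => .app t s
  | t, .atom Y => .tapp t Y

/-- Apply a term to a list of arguments `T₁ ⋯ T_k`. -/
def Term.applyArgs (t : Term) (l : List Arg) : Term := l.foldl Term.applyArg t

/-- A set `α` of pairs `(m ▷ t)` is a closed set of a phase space over the
idempotent commutative monoid `M`: it satisfies Monotonicity and both Expansion
conditions. -/
def IsClosedSet {M : Type*} [CommMonoid M] (α : Set (M × Term)) : Prop :=
  (∀ (m : M) (t : Term) (n : M), (m, t) ∈ α → (m * n, t) ∈ α) ∧
  (∀ (m : M) (x : ℕ) (t s : Term) (args : List Arg),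
     (m, Term.applyArgs (t.substV x s) args) ∈ α →
     (m, Term.applyArgs (.app (.lam x t) s) args) ∈ α) ∧
  (∀ (m : M) (X : ℕ) (t : Term) (Y : ℕ) (args : List Arg),
     (m, Term.applyArgs (t.substA X Y) args) ∈ α →
     (m, Term.applyArgs (.tapp (.tlam X t) Y) args) ∈ α)

/-- A phase model over an idempotent commutative monoid `M`: an interpretation of
formulas as subsets of `M × Term` such that atoms are interpreted by closed sets,
`→` and `∀` are interpreted via the corresponding elimination rules, and
`(ε ▷ c^A) ∈ A*` for every formula `A`. -/
structure PhaseModel (M : Type*) [CommMonoid M] where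
  idem : ∀ m : M, m * m = m
  interp : Formula → Set (M × Term)
  atom_closed : ∀ X : ℕ, IsClosedSet (interp (.atom X))
  interp_arrow : ∀ A B : Formula,
    interp (.arrow A B) =
      { p | ∀ q ∈ interp A, (p.1 * q.1, Term.app p.2 q.2) ∈ interp B }
  interp_all : ∀ (X : ℕ) (A : Formula),
    interp (.all X A) =
      { p | ∀ Y : ℕ, (p.1, Term.tapp p.2 Y) ∈ interp (A.substAtom X Y) }
  const_mem : ∀ A : Formula, ((1 : M), Term.const A) ∈ interp A

/-- The substitution environment sending each `xᵢ` to `tᵢ`. -/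
def envOf (xs : List ℕ) (ts : List Term) : ℕ → Option Term :=
  fun x => (xs.zip ts).lookup x

/-- Validity in a phase model: a term `t` of `A` from `x₁:A₁, …, x_k:A_k` is valid
iff `(m₁⋯m_k ▷ t[x₁:=t₁,…,x_k:=t_k]) ∈ A*` for all `(mᵢ ▷ tᵢ) ∈ Aᵢ*`. -/
def PhaseModel.Valid {M : Type*} [CommMonoid M] (Mo : PhaseModel M)
    (Γ : Ctx) (t : Term) (A : Formula) : Prop :=
  ∀ ms : List (M × Term),
    List.Forall₂ (fun (p : ℕ × Formula) (q : M × Term) => q ∈ Mo.interp p.2) Γ ms →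
    ((ms.map Prod.fst).prod,
      t.msubst (envOf (Γ.map Prod.fst) (ms.map Prod.snd))) ∈ Mo.interp A

/-- The Expansion closure conditions for a set of closed terms (over the trivial
one-element monoid Monotonicity is trivial). -/
def IsClosedE (α : Set Term) : Prop :=
  (∀ (x : ℕ) (t s : Term) (args : List Arg),
     Term.applyArgs (t.substV x s) args ∈ α →
     Term.applyArgs (.app (.lam x t) s) args ∈ α) ∧
  (∀ (X : ℕ) (t : Term) (Y : ℕ) (args : List Arg),
     Term.applyArgs (t.substA X Y) args ∈ α →
     Term.applyArgs (.tapp (.tlam X t) Y) args ∈ α)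

/-- `‖A‖`: the set of closed terms reducing to a normal term `s` with `⊢ s : A`. -/
def NormSet (A : Formula) : Set Term :=
  { t | Closed t ∧ ∃ s, Red t s ∧ Normal s ∧ Der [] s A }

/-- The interpretation `A*` of the E-phase structure: atoms via `‖·‖`, and `→`, `∀`
via the corresponding elimination rules. -/
def Einterp : Formula → Set Term
  | .atom X => NormSet (.atom X)
  | .arrow A B => { t | ∀ s ∈ Einterp A, Term.app t s ∈ Einterp B }
  | .all X A => { t | ∀ Y : ℕ, Term.tapp t Y ∈ Einterp (A.substAtom X Y) }
termination_by A => A.size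
decreasing_by
  all_goals simp [Formula.size, Formula.substAtom_size] <;> omega

/-- The interpretation `A†` of the I-phase structure: atoms via `‖·‖`, and `→`, `∀`
via the corresponding introduction rules (using η-expansion at the final step). -/
def Iinterp : Formula → Set Term
  | .atom X => NormSet (.atom X)
  | .arrow B C => { t | ∃ (u : Term) (x : ℕ), x ∉ u.tfv ∧ Red t u ∧
      ∀ s ∈ Iinterp B, (Term.app u (.var x)).substV x s ∈ Iinterp C }
  | .all X A => { t | ∃ u : Term, X ∉ u.afv ∧ Red t u ∧
      ∀ Y : ℕ, (Term.tapp u X).substA X Y ∈ Iinterp (A.substAtom X Y) }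
termination_by A => A.size
decreasing_by
  all_goals simp [Formula.size, Formula.substAtom_size] <;> omega

/-- An atomic base is a set of atoms `X` whose term-constants `c^X` are axioms.
`ProofTerm S t` says every term-constant occurring in `t` is some `c^X` with `X ∈ S`. -/
def ProofTerm (S : Set ℕ) : Term → Prop
  | .var _ => True
  | .const A => ∃ X ∈ S, A = .atom X
  | .lam _ t => ProofTerm S t
  | .app t s => ProofTerm S t ∧ ProofTerm S s
  | .tlam _ t => ProofTerm S t
  | .tapp t _ => ProofTerm S t

/-- qE-validity for closed terms, by induction on the formula. -/
def QEvalid : Formula → Term → Prop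
  | .atom X, t => ∃ s, Red t s ∧ Normal s ∧ Der [] s (.atom X)
  | .arrow B C, t => ∀ s : Term, Closed s → QEvalid B s → QEvalid C (.app t s)
  | .all X A, t => ∀ Y : ℕ, QEvalid (A.substAtom X Y) (.tapp t Y)
termination_by A _ => A.size
decreasing_by
  all_goals simp [Formula.size, Formula.substAtom_size] <;> omega

/-- qE-validity of an (open) term `t` of `A` from `Γ`. -/
def QEOpenValid (Γ : Ctx) (t : Term) (A : Formula) : Prop :=
  ∀ ts : List Term,
    List.Forall₂ (fun (p : ℕ × Formula) (s : Term) => Closed s ∧ QEvalid p.2 s) Γ ts →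
    QEvalid A (t.msubst (envOf (Γ.map Prod.fst) ts))

/-- E-validity: a qE-valid proof-term. -/
def EValid (S : Set ℕ) (Γ : Ctx) (t : Term) (A : Formula) : Prop :=
  ProofTerm S t ∧ QEOpenValid Γ t A

/-- Validity in the E-phase model. -/
def EPhaseValid (Γ : Ctx) (t : Term) (A : Formula) : Prop :=
  ∀ ts : List Term,
    List.Forall₂ (fun (p : ℕ × Formula) (s : Term) => Closed s ∧ s ∈ Einterp p.2) Γ ts →
    t.msubst (envOf (Γ.map Prod.fst) ts) ∈ Einterp A

/-- qI-validity for closed terms, by induction on the formula. -/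
def QIvalid : Formula → Term → Prop
  | .atom X, t => ∃ s, Red t s ∧ Normal s ∧ Der [] s (.atom X)
  | .arrow B C, t => ∃ (x : ℕ) (u : Term), Red t (.lam x u) ∧
      ∀ s : Term, Closed s → QIvalid B s → QIvalid C (u.substV x s)
  | .all X A, t => ∃ u : Term, Red t (.tlam X u) ∧
      ∀ Y : ℕ, QIvalid (A.substAtom X Y) (u.substA X Y)
termination_by A _ => A.size
decreasing_by
  all_goals simp [Formula.size, Formula.substAtom_size] <;> omega

/-- qI-validity of an (open) term `t` of `A` from `Γ`. -/
def QIOpenValid (Γ : Ctx) (t : Term) (A : Formula) : Prop :=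
  ∀ ts : List Term,
    List.Forall₂ (fun (p : ℕ × Formula) (s : Term) => Closed s ∧ QIvalid p.2 s) Γ ts →
    QIvalid A (t.msubst (envOf (Γ.map Prod.fst) ts))

/-- I-validity: a qI-valid proof-term. -/
def IValid (S : Set ℕ) (Γ : Ctx) (t : Term) (A : Formula) : Prop :=
  ProofTerm S t ∧ QIOpenValid Γ t A


lemma normal_closed_shape (S : Set ℕ) :
    ∀ (s : Term) (A : Formula), ProofTerm S s → Closed s → Normal s → Der [] s A →
      (∃ x t, s = .lam x t) ∨ (∃ X t, s = .tlam X t) ∨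
      (∃ Y ∈ S, s = .const (.atom Y) ∧ A = .atom Y) := by
  intro s
  induction s with
  | var x =>
    intro A hp hc hn hd
    cases hd with
    | ax h => simp at h
  | const B =>
    intro A hp hc hn hd
    obtain ⟨Y, hY, rfl⟩ := hp
    cases hd with
    | axc => exact Or.inr (Or.inr ⟨Y, hY, rfl, rfl⟩)
  | lam x t ih =>
    intro A hp hc hn hd
    exact Or.inl ⟨x, t, rfl⟩
  | app t u iht ihu =>
    intro A hp hc hn hd
    cases hd with
    | arrE ht hu =>
      have hct : Closed t := by
        have := (Finset.union_eq_empty.mp (hc : t.tfv ∪ u.tfv = ∅)).1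
        exact this
      have hnt : Normal t := fun s' hs' => hn _ (Step.appL _ hs')
      rcases iht _ hp.1 hct hnt ht with ⟨x, t', rfl⟩ | ⟨X, t', rfl⟩ | ⟨Y, _, _, hA⟩
      · exact absurd (Step.beta x t' u) (hn _)
      · cases ht
      · exact absurd hA (by simp)
  | tlam X t ih =>
    intro A hp hc hn hd
    exact Or.inr (Or.inl ⟨X, t, rfl⟩)
  | tapp t Y ih =>
    intro A hp hc hn hd
    cases hd with
    | allE Y ht =>
      have hnt : Normal t := fun s' hs' => hn _ (Step.tapp _ hs')
      rcases ih _ hp hc hnt ht with ⟨x, t', rfl⟩ | ⟨X', t', rfl⟩ | ⟨Z, _, _, hA⟩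
      · cases ht
      · exact absurd (Step.tbeta X' t' Y) (hn _)
      · exact absurd hA (by simp)

/-- For any atomic base `S` and any atom `X`, the only closed normal
proof-term `s` with `⊢ s:X` derivable in ILat is the term-constant `c^X`, with
`c^X ∈ S`. -/
theorem normal_proofTerm_of_atom (S : Set ℕ) (X : ℕ) (s : Term)
    (hp : ProofTerm S s) (hc : Closed s) (hn : Normal s)
    (hd : Der [] s (.atom X)) :
    s = Term.const (.atom X) ∧ X ∈ S := by
  rcases normal_closed_shape S s (.atom X) hp hc hn hd with ⟨x, t, rfl⟩ | ⟨Z, t, rfl⟩ | ⟨Y, hY, rfl, hA⟩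
  · cases hd
  · cases hd
  · cases hA
    exact ⟨rfl, hY⟩

end ILat
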